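/- arXiv:2409.20172 — 2 statements merged into one kernel-verified Lean document; each statement's English description precedes it below -/
import Mathlib

section
/- Let H be a hypergraph, let x : V(H) → [0,1], let Q ⊆ V(H) be nonempty, let q = max_{v ∈ Q} x(v), let c ∈ Q, and let r, r' ∈ [0,1] be nonnegative reals with q < r' − r. Then for every path (v_0, v_1, …, v_ℓ) in H[Q] with v_0 ∈ B^Q_c(r) and v_ℓ ∈ Q ∖ B^Q_c(r'), the sum of x(v_i) over the indices i with v_i ∈ B^Q_c(r') ∖ B^Q_c(r) is strictly greater than r' − r − q. -/
open Finset
open scoped ENNReal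

/-- A hypergraph: a finite vertex set, a finite set of nonempty hyperedges covering
all vertices. -/
structure HGraph (α : Type*) where
  V : Finset α
  E : Finset (Finset α)
  edge_sub : ∀ e ∈ E, e ⊆ V
  edge_nonempty : ∀ e ∈ E, e.Nonempty
  no_isolated : ∀ v ∈ V, ∃ e ∈ E, v ∈ e

/-- Degeneracy of a graph restricted to a finite vertex set `W`: the least `d` such that
every nonempty subset has a vertex with at most `d` neighbours inside the subset. -/
noncomputable def degeneracyOn {β : Type*} (G : SimpleGraph β) (W : Finset β) : ℕ :=
  sInf {d : ℕ | ∀ W' ⊆ W, W'.Nonempty → ∃ v ∈ W', ((W' : Set β) ∩ G.neighborSet v).ncard ≤ d}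

namespace HGraph

variable {α : Type*}

/-- The primal (Gaifman) graph of a hypergraph. -/
def primal (H : HGraph α) : SimpleGraph α where
  Adj u v := u ≠ v ∧ ∃ e ∈ H.E, u ∈ e ∧ v ∈ e
  symm := by
    constructor
    rintro u v ⟨hne, e, he, hu, hv⟩
    exact ⟨hne.symm, e, he, hv, hu⟩
  loopless := by
    constructor
    rintro u ⟨hne, -⟩
    exact hne rfl

/-- `S` is an `(A,B)`-separator in `H`: every path of the primal graph from a vertex
of `A` to a vertex of `B` meets `S`. -/
def IsSeparator (H : HGraph α) (A B S : Finset α) : Prop :=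
  ∀ a ∈ A, ∀ b ∈ B, ∀ p : H.primal.Walk a b, p.IsPath → ∃ v ∈ p.support, v ∈ S

/-- `x` is a fractional `(A,B)`-separator in `H`. -/
def IsFracSeparator [DecidableEq α] (H : HGraph α) (A B : Finset α) (x : α → ℝ) : Prop :=
  ∀ a ∈ A, ∀ b ∈ B, ∀ p : H.primal.Walk a b, p.IsPath →
    1 ≤ ∑ w ∈ p.support.toFinset, x w

/-- Fractional edge cover number of a weight function `x` on vertices. -/
noncomputable def fracCover [DecidableEq α] (H : HGraph α) (x : α → ℝ) : ℝ :=
  sInf {c : ℝ | ∃ y : Finset α → ℝ, (∀ e, 0 ≤ y e ∧ y e ≤ 1) ∧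
    (∀ v ∈ H.V, x v ≤ ∑ e ∈ H.E, if v ∈ e then y e else 0) ∧
    c = ∑ e ∈ H.E, y e}

/-- Fractional edge cover number `ρ*_H(S)` of a vertex set. -/
noncomputable def fracCoverSet [DecidableEq α] (H : HGraph α) (S : Finset α) : ℝ :=
  H.fracCover (fun v => if v ∈ S then 1 else 0)

/-- Fractional `E`-edge cover number of `x` (`∞` if no fractional `E`-edge cover exists). -/
noncomputable def fracCoverE [DecidableEq α] (H : HGraph α) (E : Finset (Finset α))
    (x : α → ℝ) : ℝ≥0∞ :=
  sInf {c : ℝ≥0∞ | ∃ y : Finset α → ℝ, (∀ e, 0 ≤ y e ∧ y e ≤ 1) ∧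
    (∀ v ∈ H.V, x v ≤ ∑ e ∈ E, if v ∈ e then y e else 0) ∧
    c = ENNReal.ofReal (∑ e ∈ E, y e)}

/-- Fractional `E`-edge cover number `ρ*_{H,E}(S)` of a vertex set. -/
noncomputable def fracCoverESet [DecidableEq α] (H : HGraph α) (E : Finset (Finset α))
    (S : Finset α) : ℝ≥0∞ :=
  H.fracCoverE E (fun v => if v ∈ S then 1 else 0)

/-- Integral edge cover number `ρ_H(S)`. -/
noncomputable def intCover [DecidableEq α] (H : HGraph α) (S : Finset α) : ℕ :=
  sInf {n : ℕ | ∃ F ⊆ H.E, S ⊆ F.biUnion id ∧ F.card = n}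

/-- Independence number `α_H(R)`: maximum size of a subset of `R` such that no
hyperedge contains two of its vertices. -/
noncomputable def indepNum [DecidableEq α] (H : HGraph α) (R : Finset α) : ℕ :=
  sSup {n : ℕ | ∃ I ⊆ R, (∀ e ∈ H.E, (I ∩ e).card ≤ 1) ∧ I.card = n}

/-- Maximum intersection size `η_H` of two distinct hyperedges. -/
noncomputable def eta [DecidableEq α] (H : HGraph α) : ℕ :=
  sSup {n : ℕ | ∃ e₁ ∈ H.E, ∃ e₂ ∈ H.E, e₁ ≠ e₂ ∧ n = (e₁ ∩ e₂).card}

/-- The (bipartite) incidence graph of a hypergraph. -/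
def incidence (H : HGraph α) : SimpleGraph (α ⊕ Finset α) where
  Adj p q :=
    (∃ v e, p = Sum.inl v ∧ q = Sum.inr e ∧ e ∈ H.E ∧ v ∈ e) ∨
    (∃ v e, p = Sum.inr e ∧ q = Sum.inl v ∧ e ∈ H.E ∧ v ∈ e)
  symm := by
    constructor
    rintro p q (⟨v, e, rfl, rfl, he, hv⟩ | ⟨v, e, rfl, rfl, he, hv⟩)
    · exact Or.inr ⟨v, e, rfl, rfl, he, hv⟩
    · exact Or.inl ⟨v, e, rfl, rfl, he, hv⟩
  loopless := by
    constructor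
    rintro p (⟨v, e, rfl, h, -, -⟩ | ⟨v, e, rfl, h, -, -⟩) <;> exact absurd h (by simp)

/-- `μ_H`: degeneracy of the incidence graph of `H`. -/
noncomputable def mu [DecidableEq α] (H : HGraph α) : ℕ :=
  degeneracyOn H.incidence (H.V.image Sum.inl ∪ H.E.image Sum.inr)

/-- `γ(P) = ∑_{e ∈ E(H) : e ∩ P ≠ ∅} γ(e)`. -/
noncomputable def edgeWeight [DecidableEq α] (H : HGraph α) (γ : Finset α → ℝ)
    (P : Finset α) : ℝ :=
  ∑ e ∈ H.E, if (e ∩ P).Nonempty then γ e else 0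

/-- `u` can reach `v` by a walk of the primal graph avoiding `S`. -/
def ReachOutside (H : HGraph α) (S : Finset α) (u v : α) : Prop :=
  ∃ p : H.primal.Walk u v, ∀ w ∈ p.support, w ∉ S

/-- The connected component of `v` in the primal graph of `H` after deleting `S`. -/
noncomputable def comp (H : HGraph α) (S : Finset α) (v : α) : Finset α := by
  classical exact H.V.filter (fun u => H.ReachOutside S v u)

/-- `S` is a `(γ,φ)`-balanced separator in `H`. -/
def IsGammaBalSep [DecidableEq α] (H : HGraph α) (γ : Finset α → ℝ) (φ : ℝ)
    (S : Finset α) : Prop :=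
  ∀ v ∈ H.V, v ∉ S → H.edgeWeight γ (H.comp S v) ≤ φ * H.edgeWeight γ H.V

/-- `S` is a `(Z,φ)`-balanced separator in `H`. -/
def IsZBalSep [DecidableEq α] (H : HGraph α) (Z : Finset α) (φ : ℝ)
    (S : Finset α) : Prop :=
  ∀ v ∈ H.V, v ∉ S →
    H.fracCoverSet (H.comp S v ∩ Z) ≤ φ * H.fracCoverSet Z

/-- `dist*_{H,x}(u,v)`: the minimum of `1` and the minimum total `x`-weight of a path
from `u` to `v` in the primal graph. -/
noncomputable def dist1 [DecidableEq α] (H : HGraph α) (x : α → ℝ) (u v : α) : ℝ :=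
  sInf ({1} ∪ {c : ℝ | ∃ p : H.primal.Walk u v, p.IsPath ∧ c = ∑ w ∈ p.support.toFinset, x w})

/-- `dist*_{H,x}(e,e') = min_{u ∈ e, v ∈ e'} dist*_{H,x}(u,v)`. -/
noncomputable def distE [DecidableEq α] (H : HGraph α) (x : α → ℝ)
    (e e' : Finset α) : ℝ :=
  sInf {c : ℝ | ∃ u ∈ e, ∃ v ∈ e', c = H.dist1 x u v}

/-- `x` is a fractional `(γ,φ)`-balanced separator in `H`. -/
def IsFracGammaBalSep [DecidableEq α] (H : HGraph α) (γ : Finset α → ℝ) (φ : ℝ)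
    (x : α → ℝ) : Prop :=
  ∀ e ∈ H.E, (1 - φ) * (∑ e' ∈ H.E, γ e') ≤ ∑ e' ∈ H.E, H.distE x e e' * γ e'

/-- The induced subhypergraph `H[Q]` for `Q ⊆ V(H)`. -/
def induce [DecidableEq α] (H : HGraph α) (Q : Finset α) (hQ : Q ⊆ H.V) :
    HGraph α where
  V := Q
  E := (H.E.image (fun e => e ∩ Q)).filter (fun e => e.Nonempty)
  edge_sub := by
    intro e he
    simp only [mem_filter, mem_image] at he
    obtain ⟨⟨e', -, rfl⟩, -⟩ := he
    exact inter_subset_right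
  edge_nonempty := by
    intro e he
    exact (mem_filter.mp he).2
  no_isolated := by
    intro v hv
    obtain ⟨e, he, hve⟩ := H.no_isolated v (hQ hv)
    exact ⟨e ∩ Q, mem_filter.mpr ⟨mem_image.mpr ⟨e, he, rfl⟩,
      ⟨v, mem_inter.mpr ⟨hve, hv⟩⟩⟩, mem_inter.mpr ⟨hve, hv⟩⟩

/-- The ball `B^Q_c(r)` of radius `r` around `c` in `H[Q]` with respect to `x`. -/
noncomputable def ball [DecidableEq α] (H : HGraph α) (x : α → ℝ) (Q : Finset α)
    (hQ : Q ⊆ H.V) (c : α) (r : ℝ) : Finset α := by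
  classical exact Q.filter (fun v => (H.induce Q hQ).dist1 x c v ≤ r)

end HGraph

/-- A tree decomposition of a hypergraph. -/
structure TreeDecomp {α : Type*} (H : HGraph α) where
  ι : Type
  fintype : Fintype ι
  T : SimpleGraph ι
  isTree : T.IsTree
  bag : ι → Finset α
  bag_sub : ∀ t, bag t ⊆ H.V
  bag_conn : ∀ v ∈ H.V, (SimpleGraph.induce {t | v ∈ bag t} T).Connected
  edge_bag : ∀ e ∈ H.E, ∃ t, e ⊆ bag t

theorem List.toFinset_tail_subset {ι : Type*} [DecidableEq ι] (l : List ι) :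
    l.tail.toFinset ⊆ l.toFinset :=
  fun _ hi => List.mem_toFinset.mpr (List.tail_subset l (List.mem_toFinset.mp hi))

namespace SimpleGraph.Walk

variable {V : Type*} [DecidableEq V] {G : SimpleGraph V} {f x : V → ℝ} {q r r' : ℝ}

/- The potential `f` rises by at most `x v` when the path enters `v`. After the last vertex at
level `≤ r` the path climbs above `r'`, and all of that climb except the last step (worth at most
`q`) is paid by vertices of the annulus `r < f ≤ r'`; `max (f a) r` is the invariant of the
induction. -/
theorem IsPath.sub_max_sub_lt_sum_annulus_tail (hx : ∀ v, 0 ≤ x v)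
    (hf : ∀ u v, G.Adj u v → f v ≤ f u + x v) {a b : V} {p : G.Walk a b} (hp : p.IsPath)
    (hq : ∀ v ∈ p.support, x v ≤ q) (hb : r' < f b) :
    r' - max (f a) r - q <
      ∑ v ∈ p.support.tail.toFinset.filter (fun v => r < f v ∧ f v ≤ r'), x v := by
  induction p with
  | @nil b =>
    have hqb := hq b (start_mem_support _)
    simp only [support_nil, List.tail_cons, List.toFinset_nil, filter_empty, sum_empty]
    linarith [le_max_left (f b) r, hx b]
  | @cons a a' b h p ih =>
    have hstep := hf a a' h
    have hq' : ∀ v ∈ p.support, x v ≤ q := fun v hv => hq v (List.mem_cons_of_mem a hv)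
    have hmax := le_max_left (f a) r
    rw [support_cons, List.tail_cons]
    by_cases hout : r' < f a'
    · have hqa' := hq' a' (start_mem_support p)
      have hsum := sum_nonneg fun v (_ : v ∈ p.support.toFinset.filter
        (fun v => r < f v ∧ f v ≤ r')) => hx v
      linarith
    have ih := ih hp.of_cons hq' hb
    by_cases hlow : f a' ≤ r
    · rw [max_eq_right hlow] at ih
      have htail :
          ∑ v ∈ p.support.tail.toFinset.filter (fun v => r < f v ∧ f v ≤ r'), x v ≤
            ∑ v ∈ p.support.toFinset.filter (fun v => r < f v ∧ f v ≤ r'), x v :=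
        sum_le_sum_of_subset_of_nonneg
          (filter_subset_filter _ (List.toFinset_tail_subset _))
          fun v _ _ => hx v
      linarith [le_max_right (f a) r]
    · rw [not_lt] at hout
      rw [not_le] at hlow
      rw [max_eq_left hlow.le] at ih
      have hfresh : a' ∉ p.support.tail.toFinset := by
        have hnodup := hp.of_cons.support_nodup
        rw [← cons_tail_support] at hnodup
        simpa using (List.nodup_cons.mp hnodup).1
      conv_rhs => rw [← cons_tail_support, List.toFinset_cons, filter_insert,
        if_pos ⟨hlow, hout⟩, sum_insert fun hmem => hfresh (mem_of_mem_filter _ hmem)]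
      linarith

theorem IsPath.sub_sub_lt_sum_annulus (hx : ∀ v, 0 ≤ x v)
    (hf : ∀ u v, G.Adj u v → f v ≤ f u + x v) {a b : V} {p : G.Walk a b} (hp : p.IsPath)
    (hq : ∀ v ∈ p.support, x v ≤ q) (ha : f a ≤ r) (hb : r' < f b) :
    r' - r - q < ∑ v ∈ p.support.toFinset.filter (fun v => r < f v ∧ f v ≤ r'), x v := by
  have key := hp.sub_max_sub_lt_sum_annulus_tail (r := r) hx hf hq hb
  rw [max_eq_right ha] at key
  exact key.trans_le <| sum_le_sum_of_subset_of_nonneg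
    (filter_subset_filter _ (List.toFinset_tail_subset _))
    fun v _ _ => hx v

end SimpleGraph.Walk

namespace HGraph

variable {α : Type*} (K : HGraph α)

theorem mem_V_of_primal_adj {u v : α} (h : K.primal.Adj u v) : v ∈ K.V :=
  let ⟨_, e, he, _, hv⟩ := h
  K.edge_sub e he hv

theorem mem_V_of_mem_support {a b : α} (p : K.primal.Walk a b) (ha : a ∈ K.V) :
    ∀ v ∈ p.support, v ∈ K.V := by
  induction p with
  | nil => simpa using ha
  | cons h p ih =>
    simpa [SimpleGraph.Walk.support_cons, ha] using ih (K.mem_V_of_primal_adj h)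

variable [DecidableEq α] {x : α → ℝ}

theorem bddBelow_dist1_set (hx : ∀ v, 0 ≤ x v) (u v : α) :
    BddBelow ({1} ∪ {c : ℝ | ∃ p : K.primal.Walk u v, p.IsPath ∧
      c = ∑ z ∈ p.support.toFinset, x z}) := by
  refine ⟨0, ?_⟩
  rintro s (rfl | ⟨p, -, rfl⟩)
  · exact zero_le_one
  · exact sum_nonneg fun z _ => hx z

theorem dist1_le_one (hx : ∀ v, 0 ≤ x v) (u v : α) : K.dist1 x u v ≤ 1 :=
  csInf_le (K.bddBelow_dist1_set hx u v) (Or.inl rfl)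

theorem dist1_le_sum_walk (hx : ∀ v, 0 ≤ x v) {u v : α} (w : K.primal.Walk u v) :
    K.dist1 x u v ≤ ∑ z ∈ w.support.toFinset, x z :=
  calc K.dist1 x u v ≤ ∑ z ∈ w.bypass.support.toFinset, x z :=
        csInf_le (K.bddBelow_dist1_set hx u v) (Or.inr ⟨w.bypass, w.bypass_isPath, rfl⟩)
    _ ≤ ∑ z ∈ w.support.toFinset, x z :=
        sum_le_sum_of_subset_of_nonneg
          (fun _ hz => List.mem_toFinset.mpr
            (w.support_bypass_subset_support (List.mem_toFinset.mp hz)))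
          fun z _ _ => hx z

theorem dist1_le_dist1_add_of_adj (hx : ∀ v, 0 ≤ x v) (c : α) {u v : α}
    (h : K.primal.Adj u v) : K.dist1 x c v ≤ K.dist1 x c u + x v := by
  suffices K.dist1 x c v - x v ≤ K.dist1 x c u by linarith
  refine le_csInf ⟨1, Or.inl rfl⟩ ?_
  rintro s (rfl | ⟨p, -, rfl⟩)
  · linarith [K.dist1_le_one hx c v, hx v]
  · have hsupp : (p.concat h).support.toFinset = insert v p.support.toFinset := by
      ext z
      simp
    have hwalk := K.dist1_le_sum_walk hx (p.concat h)
    rw [hsupp] at hwalk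
    have hinsert :
        ∑ z ∈ insert v p.support.toFinset, x z ≤ x v + ∑ z ∈ p.support.toFinset, x z := by
      by_cases hv : v ∈ p.support.toFinset
      · rw [insert_eq_of_mem hv]
        linarith [hx v]
      · rw [sum_insert hv]
    linarith

theorem mem_ball_iff {Q : Finset α} {hQ : Q ⊆ K.V} {c : α} {r : ℝ} {v : α} :
    v ∈ K.ball x Q hQ c r ↔ v ∈ Q ∧ (K.induce Q hQ).dist1 x c v ≤ r := by
  simp [ball]

end HGraph

theorem annulus_weight_general {α : Type*} [DecidableEq α] (H : HGraph α)
    (x : α → ℝ) (hx01 : ∀ v, 0 ≤ x v ∧ x v ≤ 1)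
    (Q : Finset α) (hQ : Q ⊆ H.V) (hQne : Q.Nonempty)
    (q : ℝ) (hq : q = Q.sup' hQne x)
    (c : α)
    (r r' : ℝ) :
    ∀ (v₀ vℓ : α) (p : (H.induce Q hQ).primal.Walk v₀ vℓ), p.IsPath →
      v₀ ∈ H.ball x Q hQ c r → vℓ ∈ Q → vℓ ∉ H.ball x Q hQ c r' →
      r' - r - q <
        ∑ v ∈ p.support.toFinset.filter
            (fun v => v ∈ H.ball x Q hQ c r' ∧ v ∉ H.ball x Q hQ c r), x v := by
  intro v₀ vℓ p hp h₀ hℓQ hℓ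
  have hx v : 0 ≤ x v := (hx01 v).1
  rw [H.mem_ball_iff] at h₀ hℓ
  have hsupp : ∀ v ∈ p.support, v ∈ Q := (H.induce Q hQ).mem_V_of_mem_support p h₀.1
  have hannulus : ∀ v ∈ p.support.toFinset,
      (v ∈ H.ball x Q hQ c r' ∧ v ∉ H.ball x Q hQ c r) ↔
        (r < (H.induce Q hQ).dist1 x c v ∧ (H.induce Q hQ).dist1 x c v ≤ r') := by
    intro v hv
    have hvQ := hsupp v (List.mem_toFinset.mp hv)
    simp only [H.mem_ball_iff, hvQ, true_and, not_le]
    tauto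
  rw [filter_congr hannulus]
  exact hp.sub_sub_lt_sum_annulus hx
    (fun u v h => (H.induce Q hQ).dist1_le_dist1_add_of_adj hx c h)
    (fun v hv => hq ▸ le_sup' x (hsupp v hv)) h₀.2 (lt_of_not_ge fun h => hℓ ⟨hℓQ, h⟩)

/-- Any path of `H[Q]` from inside `B^Q_c(r)` to outside `B^Q_c(r')`
picks up `x`-weight more than `r' − r − q` inside the annulus `B^Q_c(r') ∖ B^Q_c(r)`. -/
theorem annulus_weight {α : Type*} [DecidableEq α] (H : HGraph α)
    (x : α → ℝ) (hx01 : ∀ v, 0 ≤ x v ∧ x v ≤ 1)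
    (Q : Finset α) (hQ : Q ⊆ H.V) (hQne : Q.Nonempty)
    (q : ℝ) (hq : q = Q.sup' hQne x)
    (c : α) (hc : c ∈ Q)
    (r r' : ℝ) (hr0 : 0 ≤ r) (hr1 : r ≤ 1) (hr'0 : 0 ≤ r') (hr'1 : r' ≤ 1)
    (hgap : q < r' - r) :
    ∀ (v₀ vℓ : α) (p : (H.induce Q hQ).primal.Walk v₀ vℓ), p.IsPath →
      v₀ ∈ H.ball x Q hQ c r → vℓ ∈ Q → vℓ ∉ H.ball x Q hQ c r' →
      r' - r - q <
        ∑ v ∈ p.support.toFinset.filter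
            (fun v => v ∈ H.ball x Q hQ c r' ∧ v ∉ H.ball x Q hQ c r), x v :=
  annulus_weight_general H x hx01 Q hQ hQne q hq c r r'
end

section
/- Let H be a hypergraph admitting a tree decomposition of fractional hypertree width at most ω. Then for every function γ : E(H) → [0,1] there exists a (γ,1/2)-balanced separator S ⊆ V(H) in H with ρ*_H(S) ≤ ω. -/
open Finset
open scoped ENNReal

/-! Assign every hyperedge to a bag containing it and give each node of the decomposition tree
the total `γ`-weight of the hyperedges assigned to it. A node `t` minimising
`∑ a, w a * dist t a` is a weighted centroid: every branch of the tree at `t` carries at most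
half of the total weight. A component of `H - β(t)` only meets hyperedges assigned to a single
branch at `t`, so `β(t)` is a `(γ,1/2)`-balanced separator, and `ρ*(β(t)) ≤ ω` by the width
bound. -/

open Finset

namespace SimpleGraph

variable {V : Type*} {G : SimpleGraph V}

def ReachableAvoiding (G : SimpleGraph V) (t a b : V) : Prop :=
  ∃ p : G.Walk a b, t ∉ p.support

namespace ReachableAvoiding

variable {t a b c : V}

lemma symm (h : G.ReachableAvoiding t a b) : G.ReachableAvoiding t b a := by
  obtain ⟨p, hp⟩ := h
  exact ⟨p.reverse, by simpa using hp⟩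

lemma trans (h : G.ReachableAvoiding t a b) (h' : G.ReachableAvoiding t b c) :
    G.ReachableAvoiding t a c := by
  obtain ⟨p, hp⟩ := h
  obtain ⟨q, hq⟩ := h'
  exact ⟨p.append q, by rw [Walk.mem_support_append_iff]; tauto⟩

end ReachableAvoiding

lemma Reachable.reachableAvoiding_or_reachableAvoiding [DecidableEq V] {t t' s : V}
    (h : G.Reachable s t) (hne : t ≠ t') :
    G.ReachableAvoiding t t' s ∨ G.ReachableAvoiding t' t s := by
  obtain ⟨q⟩ := h
  by_cases ht' : t' ∈ q.bypass.support
  · exact Or.inl (ReachableAvoiding.symm ⟨q.bypass.takeUntil t' ht',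
      Walk.endpoint_notMem_support_takeUntil q.bypass_isPath ht' hne⟩)
  · exact Or.inr (ReachableAvoiding.symm ⟨q.bypass, ht'⟩)

lemma Reachable.exists_adj_reachableAvoiding {t s : V} (h : G.Reachable t s) (hs : s ≠ t) :
    ∃ x, G.Adj t x ∧ G.ReachableAvoiding t s x := by
  classical
  obtain ⟨q⟩ := h
  have hq := q.bypass_isPath
  generalize q.bypass = q at hq
  cases q with
  | nil => exact absurd rfl hs
  | @cons _ x _ hadj p =>
    rw [Walk.cons_isPath_iff] at hq
    exact ⟨x, hadj, ReachableAvoiding.symm ⟨p, hq.2⟩⟩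

lemma IsTree.length_eq_dist_of_isPath (hG : G.IsTree) {a b : V} {p : G.Walk a b}
    (hp : p.IsPath) : p.length = G.dist a b := by
  obtain ⟨q, hq, hql⟩ := hG.connected.exists_path_of_dist a b
  rw [(hG.existsUnique_path a b).unique hp hq, hql]

lemma IsTree.dist_eq_dist_add_one_of_reachableAvoiding (hG : G.IsTree) {t t' s : V}
    (h : G.Adj t t') (hr : G.ReachableAvoiding t t' s) : G.dist t s = G.dist t' s + 1 := by
  classical
  obtain ⟨p, hp⟩ := hr
  have hpath : (Walk.cons h p.bypass).IsPath :=
    Walk.cons_isPath_iff _ _ |>.mpr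
      ⟨p.bypass_isPath, fun ht => hp (p.support_bypass_subset_support ht)⟩
  rw [← hG.length_eq_dist_of_isPath hpath, ← hG.length_eq_dist_of_isPath p.bypass_isPath,
    Walk.length_cons]

open scoped Classical in
/-- Moving from `t` to a neighbour `x` brings the branch at `t` containing `x` one step closer
and everything else one step farther. -/
lemma IsTree.sum_mul_dist_sub_sum_mul_dist [Fintype V] (hG : G.IsTree) {t x : V}
    (h : G.Adj t x) (w : V → ℝ) :
    ∑ a, w a * G.dist x a - ∑ a, w a * G.dist t a
      = ∑ a, w a - 2 * ∑ a with G.ReachableAvoiding t x a, w a := by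
  have hnear : ∀ a ∈ univ.filter (G.ReachableAvoiding t x),
      w a * ((G.dist x a : ℝ) - G.dist t a) = -w a := by
    intro a ha
    rw [hG.dist_eq_dist_add_one_of_reachableAvoiding h (mem_filter.mp ha).2]
    push_cast
    ring
  have hfar : ∀ a ∈ univ.filter (fun a => ¬ G.ReachableAvoiding t x a),
      w a * ((G.dist x a : ℝ) - G.dist t a) = w a := by
    intro a ha
    have hxa := ((hG.connected.preconnected a t).reachableAvoiding_or_reachableAvoiding
      h.ne).resolve_left (mem_filter.mp ha).2
    rw [hG.dist_eq_dist_add_one_of_reachableAvoiding h.symm hxa]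
    push_cast
    ring
  rw [← sum_sub_distrib, ← sum_filter_add_sum_filter_not univ (G.ReachableAvoiding t x),
    ← sum_filter_add_sum_filter_not univ (G.ReachableAvoiding t x) w]
  simp only [← mul_sub]
  rw [sum_congr rfl hnear, sum_congr rfl hfar, sum_neg_distrib]
  ring

open scoped Classical in
lemma IsTree.exists_forall_sum_reachableAvoiding_le_half [Fintype V] (hG : G.IsTree)
    (w : V → ℝ) :
    ∃ t, ∀ s, s ≠ t → ∑ a with G.ReachableAvoiding t s a, w a ≤ (∑ a, w a) / 2 := by
  have : Nonempty V := hG.connected.nonempty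
  obtain ⟨t, -, ht⟩ := exists_min_image univ (fun t => ∑ a, w a * G.dist t a) univ_nonempty
  refine ⟨t, fun s hs => ?_⟩
  obtain ⟨x, hadj, hsx⟩ := (hG.connected.preconnected t s).exists_adj_reachableAvoiding hs
  have hbranch : univ.filter (G.ReachableAvoiding t s) = univ.filter (G.ReachableAvoiding t x) :=
    filter_congr fun a _ => ⟨hsx.symm.trans, hsx.trans⟩
  have := hG.sum_mul_dist_sub_sum_mul_dist hadj w
  have := ht x (mem_univ x)
  rw [hbranch]
  linarith

end SimpleGraph

namespace HGraph

variable {α : Type*} (H : HGraph α)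

lemma mem_comp {S : Finset α} {v u : α} :
    u ∈ H.comp S v ↔ u ∈ H.V ∧ H.ReachOutside S v u := by
  simp [comp]

variable [DecidableEq α]

lemma edgeWeight_V (γ : Finset α → ℝ) : H.edgeWeight γ H.V = ∑ e ∈ H.E, γ e :=
  sum_congr rfl fun e he => if_pos <| by
    rw [inter_eq_left.mpr (H.edge_sub e he)]
    exact H.edge_nonempty e he

lemma edgeWeight_le_sum_filter {γ : Finset α → ℝ} (hγ : ∀ e, 0 ≤ γ e) {P : Finset α}
    {p : Finset α → Prop} [DecidablePred p] (h : ∀ e ∈ H.E, (e ∩ P).Nonempty → p e) :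
    H.edgeWeight γ P ≤ ∑ e ∈ H.E with p e, γ e := by
  rw [edgeWeight, ← sum_filter]
  exact sum_le_sum_of_subset_of_nonneg (monotone_filter_right _ fun e he hP => h e he hP)
    fun e _ _ => hγ e

end HGraph

namespace TreeDecomp

variable {α : Type*} {H : HGraph α} (D : TreeDecomp H)

lemma reachableAvoiding_of_mem_bag {t a b : D.ι} {v : α} (hv : v ∉ D.bag t)
    (ha : v ∈ D.bag a) (hb : v ∈ D.bag b) : D.T.ReachableAvoiding t a b := by
  obtain ⟨q⟩ := (D.bag_conn v (D.bag_sub a ha)).preconnected ⟨a, ha⟩ ⟨b, hb⟩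
  refine ⟨q.map (SimpleGraph.Embedding.induce {t | v ∈ D.bag t}).toHom, fun ht => ?_⟩
  obtain ⟨⟨c, hc⟩, -, rfl⟩ := List.mem_map.mp (SimpleGraph.Walk.support_map _ q ▸ ht)
  exact hv hc

lemma reachableAvoiding_of_walk {t : D.ι} {u u' : α} (p : H.primal.Walk u u')
    (hp : ∀ z ∈ p.support, z ∉ D.bag t) {a b : D.ι} (ha : u ∈ D.bag a) (hb : u' ∈ D.bag b) :
    D.T.ReachableAvoiding t a b := by
  induction p generalizing a with
  | nil => exact D.reachableAvoiding_of_mem_bag (hp _ (List.mem_singleton_self _)) ha hb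
  | cons h p ih =>
    obtain ⟨e, he, hue, hxe⟩ := h.2
    obtain ⟨c, hc⟩ := D.edge_bag e he
    have hac := D.reachableAvoiding_of_mem_bag (hp _ List.mem_cons_self) ha (hc hue)
    exact hac.trans (ih (fun z hz => hp z (List.mem_cons_of_mem _ hz)) (hc hxe) hb)

lemma edgeWeight_comp_le [DecidableEq α] {γ : Finset α → ℝ} (hγ : ∀ e, 0 ≤ γ e)
    {f : Finset α → D.ι} (hf : ∀ e ∈ H.E, e ⊆ D.bag (f e)) {t r : D.ι} {v : α}
    (hvr : v ∈ D.bag r) [DecidablePred (D.T.ReachableAvoiding t r)] :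
    H.edgeWeight γ (H.comp (D.bag t) v)
      ≤ ∑ e ∈ H.E with D.T.ReachableAvoiding t r (f e), γ e := by
  refine H.edgeWeight_le_sum_filter hγ fun e he ⟨u, hu⟩ => ?_
  obtain ⟨hue, huC⟩ := mem_inter.mp hu
  obtain ⟨p, hp⟩ := ((H.mem_comp).mp huC).2
  exact D.reachableAvoiding_of_walk p hp hvr (hf e he hue)

end TreeDecomp

/-- If `H` has a tree decomposition of fractional hypertree width at
most `ω`, then for every `γ` there is a `(γ,1/2)`-balanced separator with `ρ*_H(S) ≤ ω`. -/
theorem bal_sep_exists {α : Type*} [DecidableEq α] (H : HGraph α)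
    (D : TreeDecomp H) (ω : ℝ) (hω : ∀ t, H.fracCoverSet (D.bag t) ≤ ω)
    (γ : Finset α → ℝ) (hγ01 : ∀ e, 0 ≤ γ e ∧ γ e ≤ 1) :
    ∃ S ⊆ H.V, H.IsGammaBalSep γ (1 / 2) S ∧ H.fracCoverSet S ≤ ω := by
  classical
  let _ := D.fintype
  -- a genuine `DecidableEq` instance, so that the fibres `f e = a` match `sum_fiberwise`
  let _ : DecidableEq D.ι := Classical.decEq _
  have : Nonempty D.ι := D.isTree.connected.nonempty
  choose! f hf using D.edge_bag
  obtain ⟨t, ht⟩ :=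
    D.isTree.exists_forall_sum_reachableAvoiding_le_half fun a => ∑ e ∈ H.E with f e = a, γ e
  refine ⟨D.bag t, D.bag_sub t, fun v hv hvt => ?_, hω t⟩
  obtain ⟨e₀, he₀, hve₀⟩ := H.no_isolated v hv
  have hvr : v ∈ D.bag (f e₀) := hf e₀ he₀ hve₀
  have hrt : f e₀ ≠ t := by rintro rfl; exact hvt hvr
  calc H.edgeWeight γ (H.comp (D.bag t) v)
      ≤ ∑ e ∈ H.E with D.T.ReachableAvoiding t (f e₀) (f e), γ e :=
        D.edgeWeight_comp_le (fun e => (hγ01 e).1) hf hvr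
    _ = ∑ a with D.T.ReachableAvoiding t (f e₀) a, ∑ e ∈ H.E with f e = a, γ e := by
        rw [sum_fiberwise_eq_sum_filter]
        simp only [mem_filter, mem_univ, true_and]
    _ ≤ (∑ a, ∑ e ∈ H.E with f e = a, γ e) / 2 := ht _ hrt
    _ = 1 / 2 * H.edgeWeight γ H.V := by rw [sum_fiberwise, H.edgeWeight_V]; ring
end
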